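/- arXiv:1106.4119 — 2 statements merged into one kernel-verified Lean document; each statement's English description precedes it below -/
import Mathlib

section
/- Let T be a locally finite tree, x₀ a base vertex, and γ an isometry of T. Then for all distinct boundary points ξ, η one has ρ_{x₀}(γξ, γη) = (j_γ(ξ) j_γ(η))^{1/2} · ρ_{x₀}(ξ,η), where j_γ(ξ) = e^{d(x₀,p) − d(p,γ^{-1}x₀)} with p the projection of ξ on [x₀, γ^{-1}x₀]. -/
open SimpleGraph

variable {V : Type*}

/-- A geodesic ray in the graph `G` starting at the vertex `x`. -/
structure TreeRay (G : SimpleGraph V) (x : V) where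
  toFun : ℕ → V
  init : toFun 0 = x
  adj : ∀ n, G.Adj (toFun n) (toFun (n + 1))
  isGeodesic : ∀ n, G.dist x (toFun n) = n

/-- Two rays (possibly with different base points) represent the same boundary
point if they eventually coincide (up to a shift of parameter). -/
def RayEquiv {G : SimpleGraph V} {x y : V} (r : TreeRay G x) (s : TreeRay G y) : Prop :=
  ∃ a b : ℕ, ∀ n, r.toFun (n + a) = s.toFun (n + b)

/-- The length of the common initial segment of two geodesic rays from the same
base point. -/
noncomputable def rayOverlap {G : SimpleGraph V} {x : V} (r s : TreeRay G x) : ℕ :=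
  sSup {n | r.toFun n = s.toFun n}

/-- The visual metric `ρ_{x}` on the boundary of a tree:
`ρ_x(ξ,η) = e^{−L}` where `L` is the length of `[x,ξ] ∩ [x,η]`, and `ρ_x(ξ,ξ) = 0`. -/
noncomputable def rho {G : SimpleGraph V} {x : V} (r s : TreeRay G x) : ℝ :=
  letI := Classical.decEq (TreeRay G x)
  if r = s then 0 else Real.exp (-(rayOverlap r s : ℝ))

/-- The cross-ratio of four boundary points with respect to the base point `x`. -/
noncomputable def crossRatio {G : SimpleGraph V} {x : V} (ξ₁ ξ₂ ξ₃ ξ₄ : TreeRay G x) : ℝ :=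
  (rho ξ₃ ξ₁ * rho ξ₄ ξ₂) / (rho ξ₃ ξ₂ * rho ξ₄ ξ₁)

/-- A locally finite tree is *without ends* if every vertex has valency at least two
(equivalently, the complement of every vertex is disconnected). -/
def NoEnds (G : SimpleGraph V) [G.LocallyFinite] : Prop :=
  ∀ v : V, 2 ≤ G.degree v

/-- An isometric automorphism of the graph `G` (a bijection preserving adjacency,
and hence the path metric). -/
structure GraphAut (G : SimpleGraph V) where
  toFun : V → V
  invFun : V → V
  left_inv : Function.LeftInverse invFun toFun
  right_inv : Function.RightInverse invFun toFun
  adj' : ∀ u v, G.Adj (toFun u) (toFun v) ↔ G.Adj u v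
  dist' : ∀ u v, G.dist (toFun u) (toFun v) = G.dist u v

/-- The image of a geodesic ray under an isometric automorphism. -/
def TreeRay.map {G : SimpleGraph V} {x : V} (f : GraphAut G) (r : TreeRay G x) :
    TreeRay G (f.toFun x) where
  toFun := f.toFun ∘ r.toFun
  init := by simp [r.init]
  adj := fun n => by simpa [f.adj'] using r.adj n
  isGeodesic := fun n => by
    have := r.isGeodesic n
    simpa [Function.comp, ← r.init, f.dist'] using this

/-- `p` is the projection of the boundary point `ξ` (a ray from `x₀`) onto the geodesic
segment `[x₀, y]`: the point of `[x₀, y]` lying on the ray toward `ξ` that is farthest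
from `x₀` (the point where the ray `[x₀,ξ]` leaves `[x₀,y]`). -/
def IsProjOn {G : SimpleGraph V} {x₀ : V} (ξ : TreeRay G x₀) (y p : V) : Prop :=
  (G.dist x₀ p + G.dist p y = G.dist x₀ y) ∧ (∃ n, ξ.toFun n = p) ∧
    ∀ q, (G.dist x₀ q + G.dist q y = G.dist x₀ y) → (∃ n, ξ.toFun n = q) →
      G.dist x₀ q ≤ G.dist x₀ p

/-- The local dilatation factor `e^{d(x₀,p) − d(p,y)}`, where `p` is the projection of a
boundary point onto `[x₀, y]` (for `y = γ⁻¹x₀` this is `j_γ(ξ)`). -/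
noncomputable def jVal (G : SimpleGraph V) (x₀ y p : V) : ℝ :=
  Real.exp ((G.dist x₀ p : ℝ) - (G.dist p y : ℝ))

/-! In a tree every path is a geodesic. Hence two geodesic rays from `x₀` sharing exactly their
first `L` edges satisfy `d(ξ m, η n) = m + n - 2L` for `m, n ≥ L`, and a ray leaving the segment
`[x₀, y]` at distance `a` from `x₀` satisfies `d(ξ m, y) = m + d(x₀, y) - 2a` for `m ≥ a`.
With `y = γ⁻¹x₀` the second formula shows that the ray from `x₀` towards `γξ` is eventually
`γ ∘ ξ` shifted in time by `d(x₀, γ⁻¹x₀) - 2a`. Comparing distances between far points of the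
image rays with the first formula gives `L' = L + d(x₀, γ⁻¹x₀) - a - b`, which is the claim
since `j_γ(ξ) = e^{2a - d(x₀, γ⁻¹x₀)}`. -/

namespace SimpleGraph

variable {G : SimpleGraph V}

structure IsGeodesicSeq (G : SimpleGraph V) (f : ℕ → V) (N : ℕ) : Prop where
  adj : ∀ k < N, G.Adj (f k) (f (k + 1))
  dist_eq : ∀ k ≤ N, G.dist (f 0) (f k) = k

def walkOfSeq (f : ℕ → V) : ∀ n, (∀ k < n, G.Adj (f k) (f (k + 1))) → G.Walk (f 0) (f n)
  | 0, _ => .nil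
  | n + 1, h => (walkOfSeq f n fun k hk => h k (by omega)).concat (h n n.lt_succ_self)

lemma length_walkOfSeq (f : ℕ → V) (n : ℕ) (h : ∀ k < n, G.Adj (f k) (f (k + 1))) :
    (walkOfSeq f n h).length = n := by
  induction n with
  | zero => rfl
  | succ n ih => simp [walkOfSeq, ih]

lemma support_walkOfSeq (f : ℕ → V) (n : ℕ) (h : ∀ k < n, G.Adj (f k) (f (k + 1))) :
    (walkOfSeq f n h).support = (List.range (n + 1)).map f := by
  induction n with
  | zero => simp [walkOfSeq]
  | succ n ih => simp [walkOfSeq, ih, List.range_succ (n := n + 1)]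

lemma IsAcyclic.length_eq_dist (hG : G.IsAcyclic) {u v : V} {p : G.Walk u v} (hp : p.IsPath) :
    p.length = G.dist u v := by
  obtain ⟨q, hq, hql⟩ := p.reachable.exists_path_of_dist
  have hpq : p = q := congrArg Subtype.val ((hG.subsingleton_path u v).elim ⟨p, hp⟩ ⟨q, hq⟩)
  rw [← hql, hpq]

lemma Walk.isGeodesicSeq_getVert {u v : V} (w : G.Walk u v) (hw : w.length = G.dist u v) :
    G.IsGeodesicSeq w.getVert w.length where
  adj k hk := w.adj_getVert_succ hk
  dist_eq k hk := by
    rw [Walk.getVert_zero, ← length_eq_dist_of_subwalk hw (w.isSubwalk_take k), Walk.take_length]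
    omega

lemma Walk.dist_getVert_add {u v : V} (w : G.Walk u v) (hw : w.length = G.dist u v) {k : ℕ}
    (hk : k ≤ w.length) : G.dist (w.getVert k) v + k = w.length := by
  rw [← length_eq_dist_of_subwalk hw (w.isSubwalk_drop k), Walk.drop_length]
  omega

namespace IsGeodesicSeq

variable {f g : ℕ → V} {M N : ℕ}

lemma index_eq_of_apply_eq (hf : G.IsGeodesicSeq f M) (hg : G.IsGeodesicSeq g N)
    (h0 : f 0 = g 0) {i j : ℕ} (hi : i ≤ M) (hj : j ≤ N) (h : f i = g j) : i = j := by
  rw [← hf.dist_eq i hi, ← hg.dist_eq j hj, h0, h]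

lemma isPath_walkOfSeq (hf : G.IsGeodesicSeq f N) : (walkOfSeq f N hf.adj).IsPath :=
  Walk.isPath_of_length_eq_dist _ (by rw [length_walkOfSeq, hf.dist_eq N le_rfl])

lemma shift (hf : G.IsGeodesicSeq f N) {K : ℕ} (hK : K ≤ N) :
    G.IsGeodesicSeq (fun i => f (K + i)) (N - K) where
  adj k hk := hf.adj (K + k) (by omega)
  -- the walk along `f K, …, f (K + k)` bounds the distance above, the triangle
  -- inequality through `f K` bounds it below
  dist_eq k hk := by
    have hadj : ∀ i < k, G.Adj (f (K + i)) (f (K + (i + 1))) := fun i hi => hf.adj _ (by omega)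
    have hle := dist_le (walkOfSeq (fun i => f (K + i)) k hadj)
    have htri := (walkOfSeq (fun i => f (K + i)) k hadj).reachable.dist_triangle_right (f 0)
    rw [length_walkOfSeq] at hle
    have h1 := hf.dist_eq K hK
    have h2 := hf.dist_eq (K + k) (by omega)
    simp only [Nat.add_zero] at htri hle ⊢
    omega

lemma eqOn_of_apply_eq (hG : G.IsAcyclic) (hf : G.IsGeodesicSeq f N)
    (hg : G.IsGeodesicSeq g N) (h0 : f 0 = g 0) (hN : f N = g N) {k : ℕ} (hk : k ≤ N) :
    f k = g k := by
  have hpath : (walkOfSeq f N hf.adj) = (walkOfSeq g N hg.adj).copy h0.symm hN.symm :=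
    congrArg Subtype.val ((hG.subsingleton_path _ _).elim ⟨_, hf.isPath_walkOfSeq⟩
      ⟨_, (Walk.isPath_copy _ _ _).2 hg.isPath_walkOfSeq⟩)
  have hsupp := congrArg Walk.support hpath
  rw [Walk.support_copy, support_walkOfSeq, support_walkOfSeq, List.map_inj_left] at hsupp
  exact hsupp k (List.mem_range.2 (by omega))

lemma dist_eq_add_of_apply_ne (hG : G.IsAcyclic) (hf : G.IsGeodesicSeq f M)
    (hg : G.IsGeodesicSeq g N) (h0 : f 0 = g 0)
    (hne : ∀ i, 0 < i → i ≤ M → i ≤ N → f i ≠ g i) : G.dist (f M) (g N) = M + N := by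
  let w : G.Walk (f M) (g N) :=
    (walkOfSeq f M hf.adj).reverse.append ((walkOfSeq g N hg.adj).copy h0.symm rfl)
  have hsupp : w.support = ((List.range (M + 1)).map f).reverse ++
      (List.range N).map (fun j => g (j + 1)) := by
    simp only [w, Walk.support_append, Walk.support_reverse, Walk.support_copy,
      support_walkOfSeq, List.range_succ_eq_map (n := N), List.map_cons, List.tail_cons,
      List.map_map]
    rfl
  have hdisj : ∀ i ≤ M, ∀ j, 0 < j → j ≤ N → f i ≠ g j := by
    rintro i hi j hj hjN hij
    obtain rfl := hf.index_eq_of_apply_eq hg h0 hi hjN hij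
    exact hne i hj hi hjN hij
  have hpath : w.IsPath := by
    rw [Walk.isPath_def, hsupp]
    refine List.Nodup.append ?_ ?_ ?_
    · refine List.nodup_reverse.2 (List.nodup_range.map_on fun i hi j hj hij => ?_)
      rw [List.mem_range] at hi hj
      exact hf.index_eq_of_apply_eq hf rfl (by omega) (by omega) hij
    · refine List.nodup_range.map_on fun i hi j hj hij => ?_
      rw [List.mem_range] at hi hj
      have := hg.index_eq_of_apply_eq hg rfl (by omega) (by omega) hij
      omega
    · simp only [List.disjoint_left, List.mem_reverse, List.mem_map, List.mem_range]
      rintro _ ⟨i, hi, rfl⟩ ⟨j, hj, hij⟩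
      exact hdisj i (by omega) (j + 1) (by omega) (by omega) hij.symm
  rw [← hG.length_eq_dist hpath]
  simp [w, length_walkOfSeq]

lemma dist_add_two_mul_of_apply_ne (hG : G.IsAcyclic) (hf : G.IsGeodesicSeq f M)
    (hg : G.IsGeodesicSeq g N) {K : ℕ} (hKM : K ≤ M) (hKN : K ≤ N) (hK : f K = g K)
    (hne : ∀ i, K < i → i ≤ M → i ≤ N → f i ≠ g i) :
    G.dist (f M) (g N) + 2 * K = M + N := by
  have := dist_eq_add_of_apply_ne hG (hf.shift hKM) (hg.shift hKN) hK
    (fun i hi hiM hiN => hne (K + i) (by omega) (by omega) (by omega))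
  simp only [Nat.add_sub_cancel' hKM, Nat.add_sub_cancel' hKN] at this
  omega

end IsGeodesicSeq

end SimpleGraph

namespace TreeRay

variable {G : SimpleGraph V} {x : V}

lemma isGeodesicSeq (r : TreeRay G x) (N : ℕ) : G.IsGeodesicSeq r.toFun N where
  adj k _ := r.adj k
  dist_eq k _ := by rw [r.init]; exact r.isGeodesic k

lemma toFun_injective : Function.Injective (toFun : TreeRay G x → ℕ → V) := by
  rintro ⟨⟩ ⟨⟩ h
  simpa using h

lemma index_eq_of_apply_eq (r s : TreeRay G x) {m n : ℕ} (h : r.toFun m = s.toFun n) : m = n :=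
  (r.isGeodesicSeq m).index_eq_of_apply_eq (s.isGeodesicSeq n) (r.init.trans s.init.symm)
    le_rfl le_rfl h

lemma apply_eq_of_le (hG : G.IsAcyclic) {r s : TreeRay G x} {n k : ℕ}
    (h : r.toFun n = s.toFun n) (hk : k ≤ n) : r.toFun k = s.toFun k :=
  (r.isGeodesicSeq n).eqOn_of_apply_eq hG (s.isGeodesicSeq n) (r.init.trans s.init.symm) h hk

lemma eq_of_rayEquiv (hG : G.IsAcyclic) {r s : TreeRay G x} (h : RayEquiv r s) : r = s := by
  obtain ⟨a, b, hab⟩ := h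
  obtain rfl : a = b := by simpa using index_eq_of_apply_eq r s (hab 0)
  exact toFun_injective <| funext fun n =>
    apply_eq_of_le hG (by simpa [add_comm] using hab n) (Nat.le_add_right n a)

variable {r s : TreeRay G x}

lemma bddAbove_setOf_apply_eq (hG : G.IsAcyclic) (h : r ≠ s) :
    BddAbove {n | r.toFun n = s.toFun n} := by
  obtain ⟨n₀, hn₀⟩ : ∃ n, r.toFun n ≠ s.toFun n := by
    by_contra! hall
    exact h (toFun_injective (funext hall))
  refine ⟨n₀, fun n hn => ?_⟩
  by_contra! hlt
  exact hn₀ (apply_eq_of_le hG hn hlt.le)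

lemma apply_rayOverlap_eq (hG : G.IsAcyclic) (h : r ≠ s) :
    r.toFun (rayOverlap r s) = s.toFun (rayOverlap r s) :=
  Nat.sSup_mem ⟨0, r.init.trans s.init.symm⟩ (bddAbove_setOf_apply_eq hG h)

lemma le_rayOverlap (hG : G.IsAcyclic) (h : r ≠ s) {n : ℕ} (hn : r.toFun n = s.toFun n) :
    n ≤ rayOverlap r s :=
  le_csSup (bddAbove_setOf_apply_eq hG h) hn

lemma dist_add_two_mul_rayOverlap (hG : G.IsAcyclic) (h : r ≠ s) {m n : ℕ}
    (hm : rayOverlap r s ≤ m) (hn : rayOverlap r s ≤ n) :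
    G.dist (r.toFun m) (s.toFun n) + 2 * rayOverlap r s = m + n :=
  (r.isGeodesicSeq m).dist_add_two_mul_of_apply_ne hG (s.isGeodesicSeq n) hm hn
    (apply_rayOverlap_eq hG h) fun _ hi _ _ hEq => (le_rayOverlap hG h hEq).not_gt hi

lemma map_apply (γ : GraphAut G) (r : TreeRay G x) (n : ℕ) :
    (r.map γ).toFun n = γ.toFun (r.toFun n) :=
  rfl

end TreeRay

lemma GraphAut.dist_apply_right {G : SimpleGraph V} (γ : GraphAut G) (u v : V) :
    G.dist u (γ.toFun v) = G.dist (γ.invFun u) v := by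
  rw [← γ.dist' (γ.invFun u), γ.right_inv u]

section

variable {G : SimpleGraph V}

lemma IsProjOn.dist_add_two_mul (hG : G.IsAcyclic) {x y p : V} (hxy : G.Reachable x y)
    {r : TreeRay G x} (hp : IsProjOn r y p) {c : ℕ} (hc : r.toFun c = p) {m : ℕ}
    (hm : c ≤ m) :
    G.dist (r.toFun m) y + 2 * c = m + G.dist x y := by
  classical
  obtain ⟨w, -, hw⟩ := hxy.exists_path_of_dist
  have hg := w.isGeodesicSeq_getVert hw
  have hxg : ∀ k ≤ w.length, G.dist x (w.getVert k) = k := fun k hk => by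
    simpa using hg.dist_eq k hk
  -- the ray leaves `w` after index `K`; maximality of `p` forces `K = c`
  set K := Nat.findGreatest (fun n => r.toFun n = w.getVert n) w.length
  have hK : r.toFun K = w.getVert K :=
    Nat.findGreatest_spec (P := fun n => r.toFun n = w.getVert n) (Nat.zero_le _)
      (by rw [r.init, Walk.getVert_zero])
  have hKD : K ≤ w.length := Nat.findGreatest_le _
  have hKc : K ≤ c := by
    have hKy := w.dist_getVert_add hw hKD
    have hmax := hp.2.2 (w.getVert K) (by rw [hxg K hKD]; omega) ⟨K, hK⟩
    rwa [hxg K hKD, ← hc, r.isGeodesic] at hmax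
  have htripod : ∀ n, K ≤ n → G.dist (r.toFun n) y + 2 * K = n + w.length := fun n hn => by
    simpa [Walk.getVert_length] using
      (r.isGeodesicSeq n).dist_add_two_mul_of_apply_ne hG hg hn hKD hK
        fun i hi _ hiD => Nat.findGreatest_is_greatest hi hiD
  have hpy := hp.1
  rw [← hc, r.isGeodesic] at hpy
  have hcy := htripod c hKc
  have := htripod m (hKc.trans hm)
  omega

lemma IsProjOn.jVal_eq {x₀ y p : V} {r : TreeRay G x₀} (hp : IsProjOn r y p) :
    jVal G x₀ y p = Real.exp (2 * G.dist x₀ p - G.dist x₀ y) := by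
  rw [jVal, ← hp.1]
  push_cast
  ring_nf

lemma rho_of_ne {x : V} {r s : TreeRay G x} (h : r ≠ s) :
    rho r s = Real.exp (-(rayOverlap r s : ℝ)) :=
  if_neg h

variable {x₀ : V}

lemma IsProjOn.eventually_eq_map (hT : G.IsTree) (γ : GraphAut G) {ξ ξ' : TreeRay G x₀} {p : V}
    (hp : IsProjOn ξ (γ.invFun x₀) p) {c : ℕ} (hc : ξ.toFun c = p)
    (hξ' : RayEquiv ξ' (ξ.map γ)) :
    ∃ N, ∀ k ≥ N,
      ξ'.toFun (k + G.dist x₀ (γ.invFun x₀)) = γ.toFun (ξ.toFun (k + 2 * c)) := by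
  obtain ⟨a, b, hab⟩ := hξ'
  set D := G.dist x₀ (γ.invFun x₀)
  have hshift : a + 2 * c = b + D := by
    have hdist := ξ'.isGeodesic (c + a)
    rw [hab c, TreeRay.map_apply, GraphAut.dist_apply_right, dist_comm] at hdist
    have := hp.dist_add_two_mul hT.isAcyclic (hT.connected _ _) hc (m := c + b) (by omega)
    omega
  refine ⟨a, fun k hk => ?_⟩
  have := hab (k + D - a)
  rwa [show k + D - a + a = k + D by omega, show k + D - a + b = k + 2 * c by omega] at this

variable {ξ η ξ' η' : TreeRay G x₀} {c d e N₁ N₂ : ℕ}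

lemma ne_of_eventually_eq_map (hG : G.IsAcyclic) (γ : GraphAut G) (hne : ξ ≠ η)
    (hξ : ∀ k ≥ N₁, ξ'.toFun (k + c) = γ.toFun (ξ.toFun (k + d)))
    (hη : ∀ k ≥ N₂, η'.toFun (k + c) = γ.toFun (η.toFun (k + e))) : ξ' ≠ η' := by
  rintro rfl
  refine hne (TreeRay.eq_of_rayEquiv hG ⟨N₁ + N₂ + d, N₁ + N₂ + e, fun n => ?_⟩)
  apply γ.left_inv.injective
  have := (hξ (n + N₁ + N₂) (by omega)).symm.trans (hη (n + N₁ + N₂) (by omega))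
  simpa only [add_assoc] using this

lemma rayOverlap_of_eventually_eq_map (hG : G.IsAcyclic) (γ : GraphAut G) (hne : ξ ≠ η)
    (hne' : ξ' ≠ η')
    (hξ : ∀ k ≥ N₁, ξ'.toFun (k + c) = γ.toFun (ξ.toFun (k + d)))
    (hη : ∀ k ≥ N₂, η'.toFun (k + c) = γ.toFun (η.toFun (k + e))) :
    2 * rayOverlap ξ' η' + d + e = 2 * rayOverlap ξ η + 2 * c := by
  set k := N₁ + N₂ + rayOverlap ξ η + rayOverlap ξ' η'
  have h' := TreeRay.dist_add_two_mul_rayOverlap hG hne' (m := k + c) (n := k + c)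
    (by omega) (by omega)
  have h := TreeRay.dist_add_two_mul_rayOverlap hG hne (m := k + d) (n := k + e)
    (by omega) (by omega)
  rw [hξ k (by omega), hη k (by omega), γ.dist'] at h'
  omega

end

theorem rho_conformal_general {V : Type*} (G : SimpleGraph V) (hT : G.IsTree)
    (x₀ : V) (γ : GraphAut G) (ξ η : TreeRay G x₀) (hne : ξ ≠ η)
    (ξ' η' : TreeRay G x₀)
    (hξ' : RayEquiv ξ' (TreeRay.map γ ξ)) (hη' : RayEquiv η' (TreeRay.map γ η))
    (p q : V) (hp : IsProjOn ξ (γ.invFun x₀) p) (hq : IsProjOn η (γ.invFun x₀) q) :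
    rho ξ' η' =
      Real.sqrt (jVal G x₀ (γ.invFun x₀) p * jVal G x₀ (γ.invFun x₀) q) * rho ξ η := by
  obtain ⟨a, ha⟩ := hp.2.1
  obtain ⟨b, hb⟩ := hq.2.1
  obtain ⟨N₁, hξN⟩ := hp.eventually_eq_map hT γ ha hξ'
  obtain ⟨N₂, hηN⟩ := hq.eventually_eq_map hT γ hb hη'
  have hne' := ne_of_eventually_eq_map hT.isAcyclic γ hne hξN hηN
  have hL : (2 * rayOverlap ξ' η' + 2 * a + 2 * b : ℝ) =
      2 * rayOverlap ξ η + 2 * G.dist x₀ (γ.invFun x₀) := by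
    exact_mod_cast rayOverlap_of_eventually_eq_map hT.isAcyclic γ hne hne' hξN hηN
  rw [rho_of_ne hne, rho_of_ne hne', hp.jVal_eq, hq.jVal_eq, ← ha, ← hb, ξ.isGeodesic,
    η.isGeodesic, ← Real.exp_add, ← Real.exp_half, ← Real.exp_add]
  congr 1
  linarith

/-- The conformality relation for the visual metric: for an isometry `γ` of a locally
finite tree and distinct boundary points `ξ, η`, one has
`ρ_{x₀}(γξ, γη) = (j_γ(ξ) j_γ(η))^{1/2} · ρ_{x₀}(ξ,η)`, where
`j_γ(ξ) = e^{d(x₀,p) − d(p,γ⁻¹x₀)}` with `p` the projection of `ξ` on `[x₀, γ⁻¹x₀]`.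
Here `ξ', η'` are the rays from `x₀` representing the boundary points `γξ, γη`. -/
theorem rho_conformal {V : Type*} (G : SimpleGraph V) (hT : G.IsTree) [G.LocallyFinite]
    (x₀ : V) (γ : GraphAut G) (ξ η : TreeRay G x₀) (hne : ξ ≠ η)
    (ξ' η' : TreeRay G x₀)
    (hξ' : RayEquiv ξ' (TreeRay.map γ ξ)) (hη' : RayEquiv η' (TreeRay.map γ η))
    (p q : V) (hp : IsProjOn ξ (γ.invFun x₀) p) (hq : IsProjOn η (γ.invFun x₀) q) :
    rho ξ' η' =
      Real.sqrt (jVal G x₀ (γ.invFun x₀) p * jVal G x₀ (γ.invFun x₀) q) * rho ξ η :=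
  rho_conformal_general G hT x₀ γ ξ η hne ξ' η' hξ' hη' p q hp hq
end

section
/- Let T be a locally finite tree without ends, and let c be a function assigning to each oriented edge e of T a value in a K-vector space, satisfying c(e) = −c(ē) for the reversed edge and Σ_{e ↦ v} c(e) = 0 for every vertex v (sum over oriented edges with target v). Then the finitely additive set function μ_c on the compact opens of ∂T determined by μ_c(U(e)) = c(e) is well-defined, and μ_c(∂T) = 0. -/
open SimpleGraph

variable {V : Type*}

/-- `U(e) ⊆ ∂T` for the oriented edge `e` from `x` to `y`: the boundary points with a
representative ray eventually contained in the basic set `A(e)`. -/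
def Ue (G : SimpleGraph V) (x₀ : V) (x y : V) : Set (TreeRay G x₀) :=
  {ξ | ∃ N : ℕ, ∀ n ≥ N, G.dist (ξ.toFun n) y < G.dist (ξ.toFun n) x}


/-!
Root the tree at `x₀`, so that boundary points are the geodesic rays from `x₀`. For an edge `e`
pointing away from `x₀`, `U(e)` is the cone of rays through its head, and `U(ē)` is the
complement of that cone. Give the cone through `v` the weight `c(parent v, v)`: harmonicity says
exactly that the weights of the cones through the children of `v` add up to the weight of `v`,
and that the cones through the neighbours of `x₀` have total weight `0`. Since the tree has no
ends, no cone is empty, so for a set `S` determined by the `n`-th vertex of a ray, the total weight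
of the level-`n` cones inside `S` is finitely additive in `S` and does not depend on `n`. It equals
`c(e)` on `U(e)`, and finitely many sets `U(eᵢ)` are all determined at a common level.
-/

namespace SimpleGraph

variable {G : SimpleGraph V}

lemma Walk.dist_getVert_of_length_eq_dist {u v : V} {p : G.Walk u v}
    (hp : p.length = G.dist u v) {n : ℕ} (hn : n ≤ p.length) :
    G.dist u (p.getVert n) = n := by
  have h₁ : G.dist u (p.getVert n) ≤ n := by
    simpa [Walk.take_length, hn] using dist_le (p.take n)
  have h₂ : G.dist (p.getVert n) v ≤ p.length - n := by
    simpa [Walk.drop_length] using dist_le (p.drop n)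
  have := (p.take n).reachable.dist_triangle_left v
  omega

lemma exists_adj_dist_eq_of_dist_eq_add_one {r v : V} {n : ℕ} (hv : G.dist r v = n + 1) :
    ∃ u, G.Adj u v ∧ G.dist r u = n := by
  obtain ⟨p, hp⟩ :=
    (Reachable.of_dist_ne_zero (by omega : G.dist r v ≠ 0)).exists_walk_length_eq_dist
  refine ⟨p.getVert n, ?_, Walk.dist_getVert_of_length_eq_dist hp (by omega)⟩
  have := p.adj_getVert_succ (i := n) (by omega)
  rwa [show n + 1 = p.length by omega, p.getVert_length] at this

lemma IsAcyclic.eq_of_adj_of_dist_add_one_eq (hG : G.IsAcyclic) {r v w₁ w₂ : V}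
    (h₁ : G.Adj w₁ v) (h₂ : G.Adj w₂ v) (hd₁ : G.dist r w₁ + 1 = G.dist r v)
    (hd₂ : G.dist r w₂ + 1 = G.dist r v) : w₁ = w₂ := by
  have hr : G.Reachable r v := Reachable.of_dist_ne_zero (by omega)
  have geodesic : ∀ {w} (h : G.Adj w v), G.dist r w + 1 = G.dist r v →
      ∃ p : G.Walk r w, (p.concat h).IsPath := fun h hd => by
    obtain ⟨p, hp⟩ := (hr.trans h.symm.reachable).exists_walk_length_eq_dist
    exact ⟨p, Walk.isPath_of_length_eq_dist _ (by rw [Walk.length_concat, hp, hd])⟩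
  obtain ⟨p₁, hp₁⟩ := geodesic h₁ hd₁
  obtain ⟨p₂, hp₂⟩ := geodesic h₂ hd₂
  obtain ⟨hw, -⟩ := Walk.concat_inj
    (Subtype.ext_iff.mp ((hG.subsingleton_path r v).elim ⟨_, hp₁⟩ ⟨_, hp₂⟩))
  exact hw

lemma IsTree.eq_and_eq_of_adj_of_dist_lt (hG : G.IsTree) {u w a b : V} (huw : G.Adj u w)
    (hab : G.Adj a b) (ha : G.dist a u < G.dist a w) (hb : G.dist b w < G.dist b u) :
    a = u ∧ b = w := by
  have e₁ := hG.dist_eq_dist_add_one_of_adj a huw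
  have e₂ := hG.dist_eq_dist_add_one_of_adj b huw
  rw [dist_comm (u := a) (v := u), dist_comm (u := a) (v := w)] at ha e₁
  rw [dist_comm (u := b) (v := u), dist_comm (u := b) (v := w)] at hb e₂
  have e₃ := hG.dist_eq_dist_add_one_of_adj u hab
  have e₄ := hG.dist_eq_dist_add_one_of_adj w hab
  have hwb : G.dist w b + 1 = G.dist w a := by omega
  by_cases hua : G.dist u a = 0
  · have hwb' : G.dist w b = 0 := by omega
    exact ⟨(hG.connected.dist_eq_zero_iff.mp hua).symm,
      (hG.connected.dist_eq_zero_iff.mp hwb').symm⟩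
  · -- The neighbour `a'` of `a` towards `u` would be a second neighbour of `a` closer to `w`.
    exfalso
    obtain ⟨a', ha'a, ha'⟩ := exists_adj_dist_eq_of_dist_eq_add_one (G := G) (r := u) (v := a)
      (n := G.dist u a - 1) (by omega)
    have e₅ := hG.dist_eq_dist_add_one_of_adj w ha'a
    have : G.dist w a' ≤ G.dist w u + G.dist u a' := hG.connected.dist_triangle
    have hwu : G.dist w u = 1 := dist_eq_one_iff_adj.mpr huw.symm
    have := hG.isAcyclic.eq_of_adj_of_dist_add_one_eq (r := w) ha'a hab.symm (by omega) hwb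
    subst this
    omega

lemma IsTree.exists_adj_dist_eq_add_one [G.LocallyFinite] (hG : G.IsTree) (hends : NoEnds G)
    (r v : V) : ∃ w, G.Adj v w ∧ G.dist r w = G.dist r v + 1 := by
  obtain ⟨w₁, hw₁, w₂, hw₂, hne⟩ :=
    (Finset.one_lt_card (s := G.neighborFinset v)).mp
      (by rw [card_neighborFinset_eq_degree]; exact hends v)
  rw [mem_neighborFinset] at hw₁ hw₂
  by_contra! h
  have e₁ := hG.dist_eq_dist_add_one_of_adj r hw₁
  have e₂ := hG.dist_eq_dist_add_one_of_adj r hw₂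
  have := h w₁ hw₁
  have := h w₂ hw₂
  exact hne (hG.isAcyclic.eq_of_adj_of_dist_add_one_eq (r := r) hw₁.symm hw₂.symm
    (by omega) (by omega))

variable (G) [G.LocallyFinite] (x₀ : V)

noncomputable def parentFinset (v : V) : Finset V :=
  {u ∈ G.neighborFinset v | G.dist x₀ u + 1 = G.dist x₀ v}

noncomputable def childFinset (v : V) : Finset V :=
  {w ∈ G.neighborFinset v | G.dist x₀ w = G.dist x₀ v + 1}

open Classical in
noncomputable def levelFinset : ℕ → Finset V
  | 0 => {x₀}
  | n + 1 => (levelFinset n).biUnion (G.childFinset x₀)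

variable {G x₀}

@[simp]
lemma mem_childFinset {v w : V} :
    w ∈ G.childFinset x₀ v ↔ G.Adj v w ∧ G.dist x₀ w = G.dist x₀ v + 1 := by
  simp [childFinset]

lemma mem_levelFinset (hG : G.Connected) {n : ℕ} {v : V} :
    v ∈ G.levelFinset x₀ n ↔ G.dist x₀ v = n := by
  induction n generalizing v with
  | zero => simp [levelFinset, hG.dist_eq_zero_iff, eq_comm]
  | succ n ih =>
    simp only [levelFinset, Finset.mem_biUnion, mem_childFinset, ih]
    refine ⟨fun ⟨u, hu, _, hd⟩ => hu ▸ hd, fun hv => ?_⟩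
    obtain ⟨u, hu, hd⟩ := exists_adj_dist_eq_of_dist_eq_add_one hv
    exact ⟨u, hd, hu, by rw [hv, hd]⟩

lemma IsAcyclic.pairwise_disjoint_childFinset (hG : G.IsAcyclic) :
    Pairwise fun u₁ u₂ => Disjoint (G.childFinset x₀ u₁) (G.childFinset x₀ u₂) :=
  fun _ _ hne => Finset.disjoint_left.mpr fun _ h₁ h₂ => by
    rw [mem_childFinset] at h₁ h₂
    exact hne (hG.eq_of_adj_of_dist_add_one_eq (r := x₀) h₁.1 h₂.1 h₁.2.symm h₂.2.symm)

lemma IsAcyclic.parentFinset_eq_singleton (hG : G.IsAcyclic) {v w : V} (hvw : G.Adj v w)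
    (hd : G.dist x₀ w = G.dist x₀ v + 1) : G.parentFinset x₀ w = {v} := by
  ext u
  simp only [parentFinset, Finset.mem_filter, mem_neighborFinset, Finset.mem_singleton]
  refine ⟨fun ⟨hwu, hu⟩ => hG.eq_of_adj_of_dist_add_one_eq hwu.symm hvw hu hd.symm, ?_⟩
  rintro rfl
  exact ⟨hvw.symm, hd.symm⟩

lemma IsTree.sum_neighborFinset_eq_add (hG : G.IsTree) {M : Type*} [AddCommMonoid M]
    (f : V → M) (v : V) :
    ∑ u ∈ G.neighborFinset v, f u =
      ∑ u ∈ G.parentFinset x₀ v, f u + ∑ w ∈ G.childFinset x₀ v, f w := by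
  rw [parentFinset, childFinset, ← Finset.sum_filter_add_sum_filter_not _
    (fun u => G.dist x₀ u + 1 = G.dist x₀ v)]
  congr 1
  refine Finset.sum_congr (Finset.filter_congr fun u hu => ?_) fun _ _ => rfl
  have := hG.dist_eq_dist_add_one_of_adj x₀ ((mem_neighborFinset _ _ _).mp hu)
  omega

end SimpleGraph

namespace TreeRay

variable {G : SimpleGraph V} {x₀ : V}

def cone (G : SimpleGraph V) (x₀ v : V) : Set (TreeRay G x₀) :=
  {ξ | ξ.toFun (G.dist x₀ v) = v}

lemma dist_toFun_le (ξ : TreeRay G x₀) (m k : ℕ) :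
    G.dist (ξ.toFun m) (ξ.toFun (m + k)) ≤ k := by
  induction k with
  | zero => simp
  | succ k ih =>
    have := (ξ.adj (m + k)).reachable.dist_triangle_right (ξ.toFun m)
    rw [dist_eq_one_iff_adj.mpr (ξ.adj (m + k))] at this
    rw [← add_assoc]
    omega

lemma toFun_eq_of_le (hG : G.IsAcyclic) {ξ η : TreeRay G x₀} {m n : ℕ} (hmn : m ≤ n)
    (h : ξ.toFun n = η.toFun n) : ξ.toFun m = η.toFun m := by
  induction n, hmn using Nat.le_induction with
  | base => exact h
  | succ n _ ih =>
    refine ih (hG.eq_of_adj_of_dist_add_one_eq (r := x₀) (ξ.adj n) (h ▸ η.adj n) ?_ ?_) <;>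
      simp only [isGeodesic]

lemma cone_subset_cone (hG : G.IsAcyclic) {v w : V} (hvw : G.Adj v w)
    (hd : G.dist x₀ w = G.dist x₀ v + 1) : cone G x₀ w ⊆ cone G x₀ v := fun ξ hξ => by
  have hadj := ξ.adj (G.dist x₀ v)
  rw [← hd, hξ] at hadj
  exact hG.eq_of_adj_of_dist_add_one_eq (r := x₀) hadj hvw (by rw [ξ.isGeodesic, hd]) hd.symm

lemma exists_mem_cone [G.LocallyFinite] (hG : G.IsTree) (hends : NoEnds G) (v : V) :
    ∃ ξ : TreeRay G x₀, ξ ∈ cone G x₀ v := by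
  choose child hchild_adj hchild_dist using hG.exists_adj_dist_eq_add_one hends x₀
  obtain ⟨P, hP⟩ := hG.connected.exists_walk_length_eq_dist x₀ v
  set d := G.dist x₀ v
  have hiter : ∀ k, G.dist x₀ (child^[k] v) = d + k := by
    intro k
    induction k with
    | zero => rfl
    | succ k ih => rw [Function.iterate_succ_apply', hchild_dist, ih, add_assoc]
  let f : ℕ → V := fun n => if n < d then P.getVert n else child^[n - d] v
  have hf_lt : ∀ n < d, f n = P.getVert n := fun n hn => if_pos hn
  have hf_ge : ∀ n, d ≤ n → f n = child^[n - d] v := fun n hn => if_neg (by omega)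
  refine ⟨⟨f, ?_, fun n => ?_, fun n => ?_⟩, ?_⟩
  · rcases Nat.eq_zero_or_pos d with h | h
    · rw [hf_ge 0 h.le, Nat.zero_sub, Function.iterate_zero_apply]
      exact (hG.connected.dist_eq_zero_iff.mp h).symm
    · rw [hf_lt 0 h, P.getVert_zero]
  · rcases lt_or_ge (n + 1) d with h | h
    · rw [hf_lt n (by omega), hf_lt (n + 1) h]
      exact P.adj_getVert_succ (by omega)
    rcases lt_or_ge n d with h' | h'
    · rw [hf_lt n h', hf_ge (n + 1) h, show n + 1 - d = 0 by omega,
        Function.iterate_zero_apply]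
      have := P.adj_getVert_succ (i := n) (by omega)
      rwa [show n + 1 = P.length by omega, P.getVert_length] at this
    · rw [hf_ge n h', hf_ge (n + 1) h, show n + 1 - d = n - d + 1 by omega,
        Function.iterate_succ_apply']
      exact hchild_adj _
  · rcases lt_or_ge n d with h | h
    · rw [hf_lt n h]
      exact Walk.dist_getVert_of_length_eq_dist hP (by omega)
    · rw [hf_ge n h, hiter]
      omega
  · show f d = v
    rw [hf_ge d le_rfl, Nat.sub_self, Function.iterate_zero_apply]

lemma dist_toFun_lt_of_mem_cone (hG : G.Connected) {u w : V}
    (hd : G.dist x₀ w = G.dist x₀ u + 1) {ξ : TreeRay G x₀} (hξ : ξ ∈ cone G x₀ w) {n : ℕ}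
    (hn : G.dist x₀ w ≤ n) : G.dist (ξ.toFun n) w < G.dist (ξ.toFun n) u := by
  obtain ⟨k, rfl⟩ := Nat.exists_eq_add_of_le hn
  have h₁ := ξ.dist_toFun_le (G.dist x₀ w) k
  have h₂ : G.dist x₀ (ξ.toFun (G.dist x₀ w + k)) ≤
      G.dist x₀ u + G.dist u (ξ.toFun (G.dist x₀ w + k)) := hG.dist_triangle
  rw [hξ, dist_comm (u := w)] at h₁
  rw [ξ.isGeodesic, dist_comm (u := u)] at h₂
  omega

lemma dist_toFun_lt_of_notMem_cone (hG : G.IsTree) {u w : V} (huw : G.Adj u w)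
    (hd : G.dist x₀ w = G.dist x₀ u + 1) {ξ : TreeRay G x₀} (hξ : ξ ∉ cone G x₀ w) (n : ℕ) :
    G.dist (ξ.toFun n) u < G.dist (ξ.toFun n) w := by
  -- The ray starts on the side of `u`; it could only leave it along the edge `u w`, at time
  -- `dist x₀ w`, i.e. through `w`.
  induction n with
  | zero => rw [ξ.init]; omega
  | succ n ih =>
    by_contra h
    have h' : G.dist (ξ.toFun (n + 1)) w < G.dist (ξ.toFun (n + 1)) u := by
      have := hG.dist_eq_dist_add_one_of_adj (ξ.toFun (n + 1)) huw
      omega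
    obtain ⟨-, hw⟩ := hG.eq_and_eq_of_adj_of_dist_lt huw (ξ.adj n) ih h'
    have hdw : G.dist x₀ w = n + 1 := by rw [← hw, ξ.isGeodesic]
    exact hξ (show ξ.toFun (G.dist x₀ w) = w by rw [hdw, hw])

lemma Ue_eq_cone (hG : G.IsTree) {u w : V} (huw : G.Adj u w)
    (hd : G.dist x₀ w = G.dist x₀ u + 1) : Ue G x₀ u w = cone G x₀ w := by
  ext ξ
  refine ⟨fun ⟨N, hN⟩ => ?_, fun hξ =>
    ⟨_, fun n hn => dist_toFun_lt_of_mem_cone hG.connected hd hξ hn⟩⟩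
  by_contra hξ
  have := hN N le_rfl
  have := dist_toFun_lt_of_notMem_cone hG huw hd hξ N
  omega

lemma Ue_eq_compl_cone (hG : G.IsTree) {u w : V} (huw : G.Adj u w)
    (hd : G.dist x₀ w = G.dist x₀ u + 1) : Ue G x₀ w u = (cone G x₀ w)ᶜ := by
  ext ξ
  refine ⟨fun ⟨N, hN⟩ hξ => ?_, fun hξ =>
    ⟨0, fun n _ => dist_toFun_lt_of_notMem_cone hG huw hd hξ n⟩⟩
  have := hN (max N (G.dist x₀ w)) (le_max_left _ _)
  have := dist_toFun_lt_of_mem_cone hG.connected hd hξ (le_max_right N (G.dist x₀ w))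
  omega

def IsCylinder (n : ℕ) (S : Set (TreeRay G x₀)) : Prop :=
  ∀ ξ η : TreeRay G x₀, ξ.toFun n = η.toFun n → ξ ∈ S → η ∈ S

lemma IsCylinder.mono (hG : G.IsAcyclic) {m n : ℕ} (hmn : m ≤ n) {S : Set (TreeRay G x₀)}
    (hS : IsCylinder m S) : IsCylinder n S :=
  fun ξ η h => hS ξ η (toFun_eq_of_le hG hmn h)

lemma IsCylinder.compl {n : ℕ} {S : Set (TreeRay G x₀)} (hS : IsCylinder n S) :
    IsCylinder n Sᶜ :=
  fun ξ η h hξ hη => hξ (hS η ξ h.symm hη)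

lemma isCylinder_univ (n : ℕ) : IsCylinder n (Set.univ : Set (TreeRay G x₀)) :=
  fun _ _ _ _ => trivial

lemma IsCylinder.iUnion {ι : Type*} {n : ℕ} {S : ι → Set (TreeRay G x₀)}
    (hS : ∀ i, IsCylinder n (S i)) : IsCylinder n (⋃ i, S i) := fun ξ η h hξ => by
  obtain ⟨i, hi⟩ := Set.mem_iUnion.mp hξ
  exact Set.mem_iUnion.mpr ⟨i, hS i ξ η h hi⟩

lemma isCylinder_cone (v : V) : IsCylinder (G.dist x₀ v) (cone G x₀ v) :=
  fun _ _ h hξ => h.symm.trans hξ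

lemma IsCylinder.cone_subset_iff {v : V} {S : Set (TreeRay G x₀)}
    (hS : IsCylinder (G.dist x₀ v) S) {ξ : TreeRay G x₀} (hξ : ξ ∈ cone G x₀ v) :
    cone G x₀ v ⊆ S ↔ ξ ∈ S :=
  ⟨fun h => h hξ, fun h _ hη => hS ξ _ (hξ.trans hη.symm) h⟩

lemma isCylinder_Ue (hG : G.IsTree) {a b : V} (hab : G.Adj a b) {n : ℕ}
    (hn : max (G.dist x₀ a) (G.dist x₀ b) ≤ n) : IsCylinder n (Ue G x₀ a b) := by
  rcases hG.dist_eq_dist_add_one_of_adj x₀ hab with h | h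
  · rw [Ue_eq_compl_cone hG hab.symm h]
    exact ((isCylinder_cone a).mono hG.isAcyclic (by omega)).compl
  · rw [Ue_eq_cone hG hab h]
    exact (isCylinder_cone b).mono hG.isAcyclic (by omega)

variable [G.LocallyFinite] {M : Type*} [AddCommGroup M]

/-- The sum has the single term `c (parent v) v`, except at the root, where it is empty. -/
noncomputable def coneWeight (G : SimpleGraph V) [G.LocallyFinite] (x₀ : V) (c : V → V → M)
    (v : V) : M :=
  ∑ u ∈ G.parentFinset x₀ v, c u v

/-- The level-`n` approximation of `μ_c(S)`. -/
noncomputable def levelMass (G : SimpleGraph V) [G.LocallyFinite] (x₀ : V) (c : V → V → M)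
    (n : ℕ) (S : Set (TreeRay G x₀)) : M :=
  open Classical in
  ∑ v ∈ G.levelFinset x₀ n, if cone G x₀ v ⊆ S then coneWeight G x₀ c v else 0

lemma coneWeight_eq (hG : G.IsAcyclic) (c : V → V → M) {v w : V} (hvw : G.Adj v w)
    (hd : G.dist x₀ w = G.dist x₀ v + 1) : coneWeight G x₀ c w = c v w := by
  rw [coneWeight, hG.parentFinset_eq_singleton hvw hd, Finset.sum_singleton]

lemma sum_childFinset_coneWeight (hG : G.IsTree) (c : V → V → M)
    (halt : ∀ x y : V, G.Adj x y → c x y = -c y x)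
    (hharm : ∀ v : V, ∑ u ∈ G.neighborFinset v, c u v = 0) (v : V) :
    ∑ w ∈ G.childFinset x₀ v, coneWeight G x₀ c w = coneWeight G x₀ c v := by
  calc ∑ w ∈ G.childFinset x₀ v, coneWeight G x₀ c w
      = -∑ w ∈ G.childFinset x₀ v, c w v := by
        rw [← Finset.sum_neg_distrib]
        refine Finset.sum_congr rfl fun w hw => ?_
        obtain ⟨hvw, hd⟩ := mem_childFinset.mp hw
        rw [coneWeight_eq hG.isAcyclic c hvw hd, halt v w hvw]
    _ = coneWeight G x₀ c v := by
        rw [neg_eq_iff_add_eq_zero, add_comm, coneWeight,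
          ← hG.sum_neighborFinset_eq_add (fun u => c u v), hharm]

lemma levelMass_succ (hG : G.IsTree) (hends : NoEnds G) (c : V → V → M)
    (halt : ∀ x y : V, G.Adj x y → c x y = -c y x)
    (hharm : ∀ v : V, ∑ u ∈ G.neighborFinset v, c u v = 0) {n : ℕ} {S : Set (TreeRay G x₀)}
    (hS : IsCylinder n S) : levelMass G x₀ c (n + 1) S = levelMass G x₀ c n S := by
  classical
  rw [levelMass, levelFinset,
    Finset.sum_biUnion (hG.isAcyclic.pairwise_disjoint_childFinset.set_pairwise _), levelMass]
  refine Finset.sum_congr rfl fun v hv => ?_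
  rw [mem_levelFinset hG.connected] at hv
  subst hv
  have hchild : ∀ w ∈ G.childFinset x₀ v, (cone G x₀ w ⊆ S ↔ cone G x₀ v ⊆ S) := by
    intro w hw
    obtain ⟨hvw, hd⟩ := mem_childFinset.mp hw
    obtain ⟨ξ, hξ⟩ := exists_mem_cone (x₀ := x₀) hG hends w
    rw [(hS.mono hG.isAcyclic (by omega)).cone_subset_iff hξ,
      hS.cone_subset_iff (cone_subset_cone hG.isAcyclic hvw hd hξ)]
  by_cases h : cone G x₀ v ⊆ S
  · rw [if_pos h, ← sum_childFinset_coneWeight hG c halt hharm v]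
    exact Finset.sum_congr rfl fun w hw => if_pos ((hchild w hw).mpr h)
  · rw [if_neg h]
    exact Finset.sum_eq_zero fun w hw => if_neg (mt (hchild w hw).mp h)

lemma levelMass_eq_of_le (hG : G.IsTree) (hends : NoEnds G) (c : V → V → M)
    (halt : ∀ x y : V, G.Adj x y → c x y = -c y x)
    (hharm : ∀ v : V, ∑ u ∈ G.neighborFinset v, c u v = 0) {m n : ℕ} (hmn : m ≤ n)
    {S : Set (TreeRay G x₀)} (hS : IsCylinder m S) :
    levelMass G x₀ c n S = levelMass G x₀ c m S := by
  induction n, hmn using Nat.le_induction with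
  | base => rfl
  | succ n hmn ih =>
    rw [levelMass_succ hG hends c halt hharm (hS.mono hG.isAcyclic hmn), ih]

lemma levelMass_univ (hG : G.IsTree) (hends : NoEnds G) (c : V → V → M)
    (halt : ∀ x y : V, G.Adj x y → c x y = -c y x)
    (hharm : ∀ v : V, ∑ u ∈ G.neighborFinset v, c u v = 0) (n : ℕ) :
    levelMass G x₀ c n Set.univ = 0 := by
  rw [levelMass_eq_of_le hG hends c halt hharm (Nat.zero_le n) (isCylinder_univ 0), levelMass,
    levelFinset, Finset.sum_singleton, if_pos (Set.subset_univ _), coneWeight]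
  exact Finset.sum_eq_zero fun u hu => absurd (Finset.mem_filter.mp hu).2 (by simp)

lemma levelMass_cone (hG : G.IsTree) (hends : NoEnds G) (c : V → V → M) (v : V) :
    levelMass G x₀ c (G.dist x₀ v) (cone G x₀ v) = coneWeight G x₀ c v := by
  rw [levelMass, Finset.sum_eq_single v, if_pos subset_rfl]
  · intro u hu huv
    rw [mem_levelFinset hG.connected] at hu
    obtain ⟨ξ, hξ⟩ := exists_mem_cone (x₀ := x₀) hG hends u
    refine if_neg fun h => huv ?_
    have hv : ξ.toFun (G.dist x₀ v) = v := h hξ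
    rwa [← hu, hξ] at hv
  · exact fun hv => absurd ((mem_levelFinset hG.connected).mpr rfl) hv

lemma levelMass_iUnion (hG : G.IsTree) (hends : NoEnds G) (c : V → V → M) {n : ℕ}
    {ι : Type*} [Fintype ι] {S : ι → Set (TreeRay G x₀)} (hS : ∀ i, IsCylinder n (S i))
    (hdisj : Pairwise fun i j => Disjoint (S i) (S j)) :
    levelMass G x₀ c n (⋃ i, S i) = ∑ i, levelMass G x₀ c n (S i) := by
  simp only [levelMass]
  rw [Finset.sum_comm]
  refine Finset.sum_congr rfl fun v hv => ?_
  rw [mem_levelFinset hG.connected] at hv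
  subst hv
  obtain ⟨ξ, hξ⟩ := exists_mem_cone (x₀ := x₀) hG hends v
  have hU := (IsCylinder.iUnion hS).cone_subset_iff hξ
  have hSi := fun i => (hS i).cone_subset_iff hξ
  by_cases h : ξ ∈ ⋃ i, S i
  · obtain ⟨i, hi⟩ := Set.mem_iUnion.mp h
    rw [if_pos (hU.mpr h), Finset.sum_eq_single i (fun j _ hji => if_neg fun hj =>
      Set.disjoint_left.mp (hdisj hji) ((hSi j).mp hj) hi) (by simp), if_pos ((hSi i).mpr hi)]
  · rw [if_neg (mt hU.mp h)]
    exact (Finset.sum_eq_zero fun i _ => if_neg fun hi =>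
      h (Set.mem_iUnion.mpr ⟨i, (hSi i).mp hi⟩)).symm

lemma levelMass_compl (hG : G.IsTree) (hends : NoEnds G) (c : V → V → M)
    (halt : ∀ x y : V, G.Adj x y → c x y = -c y x)
    (hharm : ∀ v : V, ∑ u ∈ G.neighborFinset v, c u v = 0) {n : ℕ} {S : Set (TreeRay G x₀)}
    (hS : IsCylinder n S) : levelMass G x₀ c n Sᶜ = -levelMass G x₀ c n S := by
  rw [← add_eq_zero_iff_eq_neg, ← levelMass_univ hG hends c halt hharm n, levelMass, levelMass,
    levelMass, ← Finset.sum_add_distrib]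
  refine Finset.sum_congr rfl fun v hv => ?_
  rw [mem_levelFinset hG.connected] at hv
  subst hv
  obtain ⟨ξ, hξ⟩ := exists_mem_cone (x₀ := x₀) hG hends v
  rw [hS.compl.cone_subset_iff hξ, hS.cone_subset_iff hξ]
  by_cases h : ξ ∈ S <;> simp [h]

lemma levelMass_Ue (hG : G.IsTree) (hends : NoEnds G) (c : V → V → M)
    (halt : ∀ x y : V, G.Adj x y → c x y = -c y x)
    (hharm : ∀ v : V, ∑ u ∈ G.neighborFinset v, c u v = 0) {a b : V} (hab : G.Adj a b) {n : ℕ}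
    (hn : max (G.dist x₀ a) (G.dist x₀ b) ≤ n) : levelMass G x₀ c n (Ue G x₀ a b) = c a b := by
  rcases hG.dist_eq_dist_add_one_of_adj x₀ hab with h | h
  · rw [Ue_eq_compl_cone hG hab.symm h,
      levelMass_compl hG hends c halt hharm ((isCylinder_cone a).mono hG.isAcyclic (by omega)),
      levelMass_eq_of_le hG hends c halt hharm (by omega) (isCylinder_cone a),
      levelMass_cone hG hends, coneWeight_eq hG.isAcyclic c hab.symm h, halt b a hab.symm, neg_neg]
  · rw [Ue_eq_cone hG hab h,
      levelMass_eq_of_le hG hends c halt hharm (by omega) (isCylinder_cone b),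
      levelMass_cone hG hends, coneWeight_eq hG.isAcyclic c hab h]

lemma levelMass_iUnion_Ue (hG : G.IsTree) (hends : NoEnds G) (c : V → V → M)
    (halt : ∀ x y : V, G.Adj x y → c x y = -c y x)
    (hharm : ∀ v : V, ∑ u ∈ G.neighborFinset v, c u v = 0) {ι : Type*} [Fintype ι]
    (p : ι → V × V) (hp : ∀ i, G.Adj (p i).1 (p i).2)
    (hdisj : Pairwise fun i j => Disjoint (Ue G x₀ (p i).1 (p i).2) (Ue G x₀ (p j).1 (p j).2))
    {n : ℕ} (hn : ∀ i, max (G.dist x₀ (p i).1) (G.dist x₀ (p i).2) ≤ n) :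
    levelMass G x₀ c n (⋃ i, Ue G x₀ (p i).1 (p i).2) = ∑ i, c (p i).1 (p i).2 := by
  rw [levelMass_iUnion hG hends c (fun i => isCylinder_Ue hG (hp i) (hn i)) hdisj]
  exact Finset.sum_congr rfl fun i _ => levelMass_Ue hG hends c halt hharm (hp i) (hn i)

end TreeRay

theorem harmonic_cocycle_distribution_well_defined_general {V : Type*} (G : SimpleGraph V)
    (hT : G.IsTree) [G.LocallyFinite] (hends : NoEnds G) (x₀ : V)
    (M : Type*) [AddCommGroup M]
    (c : V → V → M)
    (halt : ∀ x y : V, G.Adj x y → c x y = -c y x)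
    (hharm : ∀ v : V, ∑ u ∈ G.neighborFinset v, c u v = 0) :
    (∀ x y : V, G.Adj x y → ∀ (n : ℕ) (p : Fin n → V × V),
      (∀ i, G.Adj (p i).1 (p i).2) →
      (Pairwise fun i j => Disjoint (Ue G x₀ (p i).1 (p i).2) (Ue G x₀ (p j).1 (p j).2)) →
      Ue G x₀ x y = ⋃ i, Ue G x₀ (p i).1 (p i).2 →
      c x y = ∑ i, c (p i).1 (p i).2) ∧
    (∀ (n : ℕ) (p : Fin n → V × V),
      (∀ i, G.Adj (p i).1 (p i).2) →
      (Pairwise fun i j => Disjoint (Ue G x₀ (p i).1 (p i).2) (Ue G x₀ (p j).1 (p j).2)) →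
      (Set.univ : Set (TreeRay G x₀)) = ⋃ i, Ue G x₀ (p i).1 (p i).2 →
      ∑ i, c (p i).1 (p i).2 = 0) := by
  have level_bound : ∀ {n : ℕ} (p : Fin n → V × V) (i : Fin n),
      max (G.dist x₀ (p i).1) (G.dist x₀ (p i).2) ≤
        Finset.univ.sup fun j => max (G.dist x₀ (p j).1) (G.dist x₀ (p j).2) :=
    fun p i => Finset.le_sup (f := fun j => max (G.dist x₀ (p j).1) (G.dist x₀ (p j).2))
      (Finset.mem_univ i)
  refine ⟨fun x y hxy n p hp hdisj hun => ?_, fun n p hp hdisj hun => ?_⟩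
  · rw [← TreeRay.levelMass_Ue hT hends c halt hharm hxy (le_max_left _ _), hun,
      TreeRay.levelMass_iUnion_Ue hT hends c halt hharm p hp hdisj
        fun i => (level_bound p i).trans (le_max_right _ _)]
  · rw [← TreeRay.levelMass_iUnion_Ue hT hends c halt hharm p hp hdisj (level_bound p), ← hun,
      TreeRay.levelMass_univ hT hends c halt hharm]

/-- Let `c` assign to each oriented edge of a locally finite tree without ends a value
in a `K`-vector space `M`, with `c(e) = −c(ē)` and `∑_{e ↦ v} c(e) = 0` at every vertex
(a harmonic cocycle). Then the finitely additive set function `μ_c` on the compact opens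
of `∂T` determined by `μ_c(U(e)) = c(e)` is well defined — whenever `U(e)` is a finite
disjoint union of sets `U(eᵢ)`, one has `c(e) = ∑ c(eᵢ)` — and `μ_c(∂T) = 0`: whenever
`∂T` is a finite disjoint union of sets `U(eᵢ)`, one has `∑ c(eᵢ) = 0`. -/
theorem harmonic_cocycle_distribution_well_defined {V : Type*} (G : SimpleGraph V)
    (hT : G.IsTree) [G.LocallyFinite] (hends : NoEnds G) (x₀ : V)
    (K : Type*) [Field K] (M : Type*) [AddCommGroup M] [Module K M]
    (c : V → V → M)
    (halt : ∀ x y : V, G.Adj x y → c x y = -c y x)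
    (hharm : ∀ v : V, ∑ u ∈ G.neighborFinset v, c u v = 0) :
    (∀ x y : V, G.Adj x y → ∀ (n : ℕ) (p : Fin n → V × V),
      (∀ i, G.Adj (p i).1 (p i).2) →
      (Pairwise fun i j => Disjoint (Ue G x₀ (p i).1 (p i).2) (Ue G x₀ (p j).1 (p j).2)) →
      Ue G x₀ x y = ⋃ i, Ue G x₀ (p i).1 (p i).2 →
      c x y = ∑ i, c (p i).1 (p i).2) ∧
    (∀ (n : ℕ) (p : Fin n → V × V),
      (∀ i, G.Adj (p i).1 (p i).2) →
      (Pairwise fun i j => Disjoint (Ue G x₀ (p i).1 (p i).2) (Ue G x₀ (p j).1 (p j).2)) →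
      (Set.univ : Set (TreeRay G x₀)) = ⋃ i, Ue G x₀ (p i).1 (p i).2 →
      ∑ i, c (p i).1 (p i).2 = 0) :=
  harmonic_cocycle_distribution_well_defined_general G hT hends x₀ M c halt hharm
end
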